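/- For all n ≥ 1, φⁿ(2) contains no factor a_{3q}a_{3q+1}⋯a_{3q+11} of length 12 starting at a position divisible by 3 such that a_{3q} = a_{3q+3} = a_{3q+6} = a_{3q+9}. -/

import Mathlib

/-- Letters: `0,1,2` represent `1,2,3`. `sigmaM` exchanges letters 1 and 2. -/
def sigmaM : Fin 3 → Fin 3
  | 0 => 1
  | 1 => 0
  | 2 => 2

/-- `rhoM` exchanges letters 2 and 3. -/
def rhoM : Fin 3 → Fin 3
  | 0 => 0
  | 1 => 2
  | 2 => 1

/-- `phi a = σ(a) · a · ρ(a)`. -/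
def phi (a : List (Fin 3)) : List (Fin 3) := a.map sigmaM ++ a ++ a.map rhoM

/-- Kurosaki word `φⁿ(2)` (the letter 2 is encoded as `1 : Fin 3`). -/
def K (n : ℕ) : List (Fin 3) := phi^[n] [1]

/-- `w` has period `p`. -/
def HasPeriod (w : List (Fin 3)) (p : ℕ) : Prop :=
  0 < p ∧ ∀ i, i + p < w.length → w[i]! = w[i + p]!

def IsLeastPeriod (w : List (Fin 3)) (p : ℕ) : Prop :=
  HasPeriod w p ∧ ∀ q, HasPeriod w q → p ≤ q

/-- every factor has exponent at most 7/4. -/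
def Avoids74 (w : List (Fin 3)) : Prop :=
  ∀ x p, x <:+: w → x ≠ [] → IsLeastPeriod x p → 4 * x.length ≤ 7 * p

/-- `w` contains no nonempty factor of the form `x ++ x`. -/
def SqFree (w : List (Fin 3)) : Prop :=
  ∀ x : List (Fin 3), x ≠ [] → ¬ (x ++ x) <:+: w

/-- the triple of `w` at positions `3k, 3k+1, 3k+2` is a permutation of `123`. -/
def TripleDistinct (w : List (Fin 3)) : Prop :=
  ∀ k, 3 * k + 2 < w.length →
    w[3 * k]! ≠ w[3 * k + 1]! ∧ w[3 * k]! ≠ w[3 * k + 2]! ∧ w[3 * k + 1]! ≠ w[3 * k + 2]!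

/-!
Letters `0, 1, 2` stand for `1, 2, 3`. Taking every third letter commutes with `φ` on words
whose length is divisible by 3, and `φ(2) = 123`, so the letters `a₀, a₃, a₆, …` of `φⁿ⁺¹(2)`
spell `φⁿ(1)`; it therefore suffices that `φⁿ(1)` contains no factor `xxxx`.
A run of four letters in `φ w = σ(w) · w · ρ(w)` either lies in one block, hence gives a run in
`w` because `σ` and `ρ` are involutions, or lies in the six letters around a block boundary.
For `n ≥ 1` the word `φⁿ(1)` begins with `211` or `122` and ends with `211` or `311`, a property
that `φ` preserves, and none of the eight possible boundary words contains a run of four.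
-/

open List

section Runs

variable {α : Type*}

def IsRunFree (k : ℕ) (w : List α) : Prop := ∀ a, ¬ replicate k a <:+: w

instance [Fintype α] [DecidableEq α] (k : ℕ) : DecidablePred (IsRunFree (α := α) k) :=
  fun w => inferInstanceAs (Decidable (∀ a, ¬ replicate k a <:+: w))

lemma infix_append_of_length_le_succ {l xs ys s p : List α} {k : ℕ}
    (hl : l.length ≤ k + 1) (hs : s <:+ xs) (hp : p <+: ys) (hks : k ≤ s.length)
    (hkp : k ≤ p.length) (h : l <:+: xs ++ ys) :
    l <:+: xs ∨ l <:+: ys ∨ l <:+: s ++ p := by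
  rcases infix_append_iff_ne_nil.mp h with h | h | ⟨l₁, l₂, h₁, h₂, rfl, hl₁, hl₂⟩
  · exact .inl h
  · exact .inr (.inl h)
  · have : l₁.length ≤ k ∧ l₂.length ≤ k := by
      simp only [length_append] at hl
      have := length_pos_iff.mpr h₁
      have := length_pos_iff.mpr h₂
      omega
    exact .inr (.inr (infix_append_iff.mpr (.inr (.inr ⟨l₁, l₂, rfl,
      suffix_of_suffix_length_le hl₁ hs (by omega),
      prefix_of_prefix_length_le hl₂ hp (by omega)⟩))))

lemma IsRunFree.append {xs ys s p : List α} {k : ℕ} (hxs : IsRunFree (k + 1) xs)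
    (hys : IsRunFree (k + 1) ys) (hs : s <:+ xs) (hp : p <+: ys) (hks : k ≤ s.length)
    (hkp : k ≤ p.length) (hsp : IsRunFree (k + 1) (s ++ p)) :
    IsRunFree (k + 1) (xs ++ ys) := fun a h =>
  (infix_append_of_length_le_succ (by simp) hs hp hks hkp h).elim (hxs a)
    (Or.elim · (hys a) (hsp a))

lemma IsRunFree.map_of_involutive {f : α → α} (hf : Function.Involutive f) {k : ℕ}
    {w : List α} (hw : IsRunFree k w) : IsRunFree k (w.map f) := fun a h => by
  have := h.map f
  rw [map_replicate, map_map, hf.comp_self, map_id] at this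
  exact hw (f a) this

lemma replicate_infix_of_getElem! [Inhabited α] {w : List α} {i k : ℕ}
    (hk : i + k ≤ w.length) (h : ∀ j < k, w[i + j]! = w[i]!) :
    replicate k w[i]! <:+: w := by
  have : (w.drop i).take k = replicate k w[i]! := by
    refine ext_getElem (by simp only [length_take, length_drop, length_replicate]; omega)
      fun j hj _ => ?_
    simp only [getElem_take, getElem_drop, getElem_replicate]
    simp only [length_take, length_drop] at hj
    rw [← h j (by omega), getElem!_pos w (i + j) (by omega)]
  exact this ▸ (take_prefix k _).isInfix.trans (drop_suffix i w).isInfix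

end Runs

section EveryThird

variable {α : Type*}

def everyThird : List α → List α
  | [] => []
  | [a] => [a]
  | [a, _] => [a]
  | a :: _ :: _ :: t => a :: everyThird t

lemma getElem?_everyThird (w : List α) (q : ℕ) : (everyThird w)[q]? = w[3 * q]? := by
  induction w using everyThird.induct generalizing q with
  | case4 a b c t ih => cases q <;> simp [everyThird, ih, Nat.mul_succ]
  | _ => cases q <;> simp [everyThird, Nat.mul_succ]

lemma getElem!_everyThird [Inhabited α] (w : List α) (q : ℕ) :
    (everyThird w)[q]! = w[3 * q]! := by
  simp only [getElem!_eq_getElem?_getD, getElem?_everyThird]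

lemma everyThird_append {u : List α} (hu : 3 ∣ u.length) (v : List α) :
    everyThird (u ++ v) = everyThird u ++ everyThird v := by
  induction u using everyThird.induct with
  | case1 => rfl
  | case4 a b c t ih => simp [everyThird, ih (by simpa using hu)]
  | _ => simp at hu

lemma everyThird_map {β : Type*} (f : α → β) (w : List α) :
    everyThird (w.map f) = (everyThird w).map f := by
  induction w using everyThird.induct with
  | case4 a b c t ih => simp [everyThird, ih]
  | _ => rfl

end EveryThird

lemma length_phi (w : List (Fin 3)) : (phi w).length = 3 * w.length := by
  simp only [phi, length_append, length_map]; ring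

lemma length_iterate_phi (n : ℕ) (w : List (Fin 3)) :
    (phi^[n] w).length = 3 ^ n * w.length := by
  induction n with
  | zero => simp
  | succ n ih => rw [Function.iterate_succ_apply', length_phi, ih, pow_succ]; ring

lemma everyThird_phi {w : List (Fin 3)} (hw : 3 ∣ w.length) :
    everyThird (phi w) = phi (everyThird w) := by
  rw [phi, everyThird_append (by simpa using dvd_add (by simpa using hw) hw),
    everyThird_append (by simpa using hw), everyThird_map, everyThird_map, phi]

lemma everyThird_iterate_phi {w : List (Fin 3)} (hw : 3 ∣ w.length) (n : ℕ) :
    everyThird (phi^[n] w) = phi^[n] (everyThird w) := by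
  induction n with
  | zero => rfl
  | succ n ih =>
    rw [Function.iterate_succ_apply', Function.iterate_succ_apply', ← ih,
      everyThird_phi (by rw [length_iterate_phi]; exact Dvd.dvd.mul_left hw _)]

lemma everyThird_K_succ (n : ℕ) : everyThird (K (n + 1)) = phi^[n] [0] := by
  rw [K, Function.iterate_succ_apply, everyThird_iterate_phi (by decide)]
  rfl

lemma sigmaM_involutive : Function.Involutive sigmaM := by
  unfold Function.Involutive; decide

lemma rhoM_involutive : Function.Involutive rhoM := by
  unfold Function.Involutive; decide

def IsPhiOrbitShaped (w : List (Fin 3)) : Prop :=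
  (∃ p ∈ [[1, 0, 0], [0, 1, 1]], p <+: w) ∧ (∃ s ∈ [[1, 0, 0], [2, 0, 0]], s <:+ w) ∧
    IsRunFree 4 w

lemma IsPhiOrbitShaped.phi {w : List (Fin 3)} (hw : IsPhiOrbitShaped w) :
    IsPhiOrbitShaped (phi w) := by
  obtain ⟨⟨p, hpP, hp⟩, ⟨s, hsS, hs⟩, hrun⟩ := hw
  obtain ⟨hσp, hρs, hp3, hs3, hbdryσ, hbdryρ⟩ :
      p.map sigmaM ∈ [[1, 0, 0], [0, 1, 1]] ∧ s.map rhoM ∈ [[1, 0, 0], [2, 0, 0]] ∧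
      p.length = 3 ∧ s.length = 3 ∧
      IsRunFree 4 (s.map sigmaM ++ p) ∧ IsRunFree 4 (s ++ p.map rhoM) := by
    clear hp hs; revert s p; decide
  rw [_root_.phi, append_assoc]
  refine ⟨⟨p.map sigmaM, hσp, (hp.map sigmaM).trans (prefix_append _ _)⟩,
    ⟨s.map rhoM, hρs, by rw [← append_assoc]; exact (hs.map rhoM).trans (suffix_append _ _)⟩,
    ?_⟩
  have hρ := hrun.map_of_involutive rhoM_involutive
  have hσ := hrun.map_of_involutive sigmaM_involutive
  exact hσ.append (hrun.append hρ hs (hp.map rhoM) hs3.ge (by simp [hp3]) hbdryρ)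
    (hs.map sigmaM) (hp.trans (prefix_append _ _)) (by simp [hs3]) hp3.ge hbdryσ

lemma isPhiOrbitShaped_iterate_phi_zero {n : ℕ} (hn : 1 ≤ n) :
    IsPhiOrbitShaped (phi^[n] [0]) := by
  induction n, hn using Nat.le_induction with
  | base => unfold IsPhiOrbitShaped; decide
  | succ n _ ih => rw [Function.iterate_succ_apply']; exact ih.phi

lemma isRunFree_iterate_phi_zero (n : ℕ) : IsRunFree 4 (phi^[n] [0]) := by
  cases n with
  | zero => decide
  | succ n => exact (isPhiOrbitShaped_iterate_phi_zero (by omega)).2.2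

lemma length_K (n : ℕ) : (K n).length = 3 ^ n := by
  simp [K, length_iterate_phi]

theorem stmt4 : ∀ n : ℕ, 1 ≤ n → ∀ q : ℕ, 3 * q + 11 < (K n).length →
    ¬ ((K n)[3 * q]! = (K n)[3 * q + 3]! ∧ (K n)[3 * q]! = (K n)[3 * q + 6]! ∧
       (K n)[3 * q]! = (K n)[3 * q + 9]!) := by
  rintro n hn q hq ⟨e1, e2, e3⟩
  obtain ⟨m, rfl⟩ : ∃ m, n = m + 1 := ⟨n - 1, by omega⟩
  have hG (j : ℕ) : (phi^[m] [0])[q + j]! = (K (m + 1))[3 * q + 3 * j]! := by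
    rw [← everyThird_K_succ, getElem!_everyThird, mul_add]
  have hG0 : (phi^[m] [0])[q]! = (K (m + 1))[3 * q]! := by simpa using hG 0
  have hlen : q + 4 ≤ (phi^[m] [0]).length := by
    rw [length_K, pow_succ] at hq
    rw [length_iterate_phi, length_singleton, mul_one]
    omega
  refine isRunFree_iterate_phi_zero m _ (replicate_infix_of_getElem! hlen fun j hj => ?_)
  rw [hG, hG0]
  interval_cases j <;> simp_all
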